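/- arXiv:2511.19133 — 2 statements merged into one kernel-verified Lean document; each statement's English description precedes it below -/
import Mathlib

section
/- With f as above (f(γ) = −α_W − 2·ln(α_L)·γ/√(A + γ²) + 2γ/(A + γ²), A > 0, 0 < α_L < 1, α_W > 0), the critical points of f satisfy γ² = (2A + (ln α_L)²A² ± ln(α_L)·A·√((ln α_L)²A² + 8A))/2, and since ln(α_L) < 0 the only nonnegative admissible value of γ² is the one with the minus sign in front of ln(α_L) (i.e., γ² = (2A + (ln α_L)²A² − ln(α_L)·A·√((ln α_L)²A² + 8A))/2). -/
open Real

theorem critical_points_of_tradeoff_function (A αL αW : ℝ)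
    (hA : 0 < A) (hα0 : 0 < αL) (hα1 : αL < 1) (hW : 0 < αW) :
    ∀ γ : ℝ,
      deriv (fun γ : ℝ =>
        -αW - 2 * Real.log αL * γ / Real.sqrt (A + γ ^ 2) + 2 * γ / (A + γ ^ 2)) γ = 0 →
      (γ ^ 2 =
          (2 * A + (Real.log αL) ^ 2 * A ^ 2 -
            Real.log αL * A * Real.sqrt ((Real.log αL) ^ 2 * A ^ 2 + 8 * A)) / 2 ∨
        γ ^ 2 =
          (2 * A + (Real.log αL) ^ 2 * A ^ 2 +
            Real.log αL * A * Real.sqrt ((Real.log αL) ^ 2 * A ^ 2 + 8 * A)) / 2) ∧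
      γ ^ 2 =
        (2 * A + (Real.log αL) ^ 2 * A ^ 2 -
          Real.log αL * A * Real.sqrt ((Real.log αL) ^ 2 * A ^ 2 + 8 * A)) / 2 := by
  intro γ hderiv
  set L := Real.log αL with hLdef
  have hL : L < 0 := Real.log_neg hα0 hα1
  have hpos : 0 < A + γ ^ 2 := by positivity
  set s := Real.sqrt (A + γ ^ 2) with hsdef
  have hs0 : 0 < s := Real.sqrt_pos.mpr hpos
  have hs2 : s ^ 2 = A + γ ^ 2 := Real.sq_sqrt hpos.le
  -- compute the derivative
  have hinner : HasDerivAt (fun γ : ℝ => A + γ ^ 2) (2 * γ) γ := by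
    simpa using ((hasDerivAt_pow 2 γ).const_add A)
  have hsqrt : HasDerivAt (fun γ : ℝ => Real.sqrt (A + γ ^ 2))
      (2 * γ / (2 * s)) γ := hinner.sqrt hpos.ne'
  have hnum1 : HasDerivAt (fun γ : ℝ => 2 * L * γ) (2 * L) γ := by
    simpa using (hasDerivAt_id γ).const_mul (2 * L)
  have hdiv1 : HasDerivAt (fun γ : ℝ => 2 * L * γ / Real.sqrt (A + γ ^ 2))
      ((2 * L * s - 2 * L * γ * (2 * γ / (2 * s))) / s ^ 2) γ :=
    hnum1.div hsqrt hs0.ne'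
  have hnum2 : HasDerivAt (fun γ : ℝ => 2 * γ) (2 : ℝ) γ := by
    simpa using (hasDerivAt_id γ).const_mul (2 : ℝ)
  have hdiv2 : HasDerivAt (fun γ : ℝ => 2 * γ / (A + γ ^ 2))
      ((2 * (A + γ ^ 2) - 2 * γ * (2 * γ)) / (A + γ ^ 2) ^ 2) γ :=
    hnum2.div hinner hpos.ne'
  have hful : HasDerivAt (fun γ : ℝ =>
      -αW - 2 * L * γ / Real.sqrt (A + γ ^ 2) + 2 * γ / (A + γ ^ 2))
      (0 - (2 * L * s - 2 * L * γ * (2 * γ / (2 * s))) / s ^ 2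
        + (2 * (A + γ ^ 2) - 2 * γ * (2 * γ)) / (A + γ ^ 2) ^ 2) γ :=
    ((hasDerivAt_const γ (-αW)).sub hdiv1).add hdiv2
  have hderiv' : 0 - (2 * L * s - 2 * L * γ * (2 * γ / (2 * s))) / s ^ 2
      + (2 * (A + γ ^ 2) - 2 * γ * (2 * γ)) / (A + γ ^ 2) ^ 2 = 0 := by
    rw [← hful.deriv]; exact hderiv
  -- key equation
  have hkey : L * A * s = A - γ ^ 2 := by
    have h := hderiv'
    rw [← hs2] at h
    field_simp at h
    have h4 : 4 * s ^ 3 * (L * A * s - (A - γ ^ 2)) = 0 := by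
      linear_combination -2 * s ^ 3 * h + (4 * s ^ 3 - 4 * L * s ^ 4) * hs2
    have h5 : L * A * s - (A - γ ^ 2) = 0 := by
      rcases mul_eq_zero.mp h4 with h' | h'
      · exact absurd h' (by positivity)
      · exact h'
    linarith
  have hsq : (L * A) ^ 2 * (A + γ ^ 2) = (A - γ ^ 2) ^ 2 := by
    linear_combination (L * A * s + (A - γ ^ 2)) * hkey - (L * A) ^ 2 * hs2
  set W := Real.sqrt (L ^ 2 * A ^ 2 + 8 * A) with hWdef
  have hWpos : 0 < L ^ 2 * A ^ 2 + 8 * A := by positivity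
  have hW2 : W ^ 2 = L ^ 2 * A ^ 2 + 8 * A := Real.sq_sqrt hWpos.le
  have hW0 : 0 ≤ W := Real.sqrt_nonneg _
  have hfac : (γ ^ 2 - (2 * A + L ^ 2 * A ^ 2 - L * A * W) / 2) *
      (γ ^ 2 - (2 * A + L ^ 2 * A ^ 2 + L * A * W) / 2) = 0 := by
    linear_combination -hsq - (L * A) ^ 2 / 4 * hW2
  have hgtA : A < γ ^ 2 := by
    have : L * A * s < 0 := mul_neg_of_neg_of_pos (mul_neg_of_neg_of_pos hL hA) hs0
    linarith [hkey ▸ this]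
  have hrplus : (2 * A + L ^ 2 * A ^ 2 + L * A * W) / 2 < A := by
    nlinarith [hW2, hW0, mul_pos hA hA, mul_neg_of_neg_of_pos hL hA]
  rcases mul_eq_zero.mp hfac with h | h
  · have hx : γ ^ 2 = (2 * A + L ^ 2 * A ^ 2 - L * A * W) / 2 := by linarith
    exact ⟨Or.inl hx, hx⟩
  · exfalso
    have hx : γ ^ 2 = (2 * A + L ^ 2 * A ^ 2 + L * A * W) / 2 := by linarith
    linarith
end

section
/- Define T(α_L) = 2A + (ln α_L)²·A² − ln(α_L)·A·√((ln α_L)²·A² + 8A) for A > 0 and α_L ∈ (0,1]. Then T is strictly decreasing in α_L on (0,1), T(1) = 2A, and consequently T(α_L) > 2A for all α_L ∈ (0,1). -/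
open Real Set

/-! With `x = -A · ln α`, which is nonnegative on `(0, 1]` and strictly decreasing in `α`,
`T α = 2A + x² + x √(x² + 8A)`, a strictly increasing function of `x ≥ 0`. -/

lemma strictMonoOn_sq_add_mul_sqrt (c : ℝ) :
    StrictMonoOn (fun x : ℝ => x ^ 2 + x * √(x ^ 2 + c)) (Ici 0) := by
  intro x hx y hy hxy
  have hx : 0 ≤ x := hx
  have hsq : x ^ 2 < y ^ 2 := pow_lt_pow_left₀ hxy hx two_ne_zero
  have hsqrt : √(x ^ 2 + c) ≤ √(y ^ 2 + c) := sqrt_le_sqrt (by linarith)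
  have hprod : x * √(x ^ 2 + c) ≤ y * √(y ^ 2 + c) :=
    mul_le_mul hxy.le hsqrt (sqrt_nonneg _) (hx.trans hxy.le)
  simp only
  linarith

lemma strictAntiOn_neg_log_mul {A : ℝ} (hA : 0 < A) :
    StrictAntiOn (fun α : ℝ => -log α * A) (Ioi 0) := by
  intro x hx y _ hxy
  have hlog := log_lt_log hx hxy
  simp only
  nlinarith

theorem T_strictly_decreasing (A : ℝ) (hA : 0 < A) :
    let T : ℝ → ℝ := fun αL =>
      2 * A + (Real.log αL) ^ 2 * A ^ 2 -
        Real.log αL * A * Real.sqrt ((Real.log αL) ^ 2 * A ^ 2 + 8 * A)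
    StrictAntiOn T (Set.Ioo (0 : ℝ) 1) ∧ T 1 = 2 * A ∧
      ∀ αL ∈ Set.Ioo (0 : ℝ) 1, T αL > 2 * A := by
  intro T
  set h : ℝ → ℝ := fun x => x ^ 2 + x * √(x ^ 2 + 8 * A)
  have hT : T = fun α => 2 * A + h (-log α * A) := by
    funext α
    simp only [T, h, neg_mul, neg_sq, mul_pow]
    ring
  have hanti : StrictAntiOn T (Ioc 0 1) := by
    rw [hT]
    refine fun x hx y hy hxy => add_lt_add_right ?_ _
    refine (strictMonoOn_sq_add_mul_sqrt (8 * A)).comp_strictAntiOn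
      ((strictAntiOn_neg_log_mul hA).mono Ioc_subset_Ioi_self) ?_ hx hy hxy
    intro α hα
    exact mul_nonneg (neg_nonneg.mpr (log_nonpos hα.1.le hα.2)) hA.le
  have hT1 : T 1 = 2 * A := by simp [T]
  refine ⟨hanti.mono Ioo_subset_Ioc_self, hT1, fun α hα => ?_⟩
  rw [← hT1]
  exact hanti (Ioo_subset_Ioc_self hα) (right_mem_Ioc.mpr one_pos) hα.2
end
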